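/- arXiv:1306.1069 — 3 statements merged into one kernel-verified Lean document; each statement's English description precedes it below -/
import Mathlib

section
/- Every 2-store-regular set of level-2 counter configurations is E-regular: if a set C of configurations is accepted by a (deterministic) 2-store automaton, then the set of tree encodings { E(c) : c ∈ C } is a regular tree language. -/
/-! Binary trees, tree automata, the tree encoding `E` of level-2 counter
configurations, and (alternating) 2-store automata. -/

namespace Enc

/-- Binary trees with node labels in `α` (`nil` is the empty tree). -/
inductive BTree (α : Type) where
  | nil : BTree α
  | node (a : α) (l r : BTree α) : BTree α

/-- A (nondeterministic, bottom-up) finite tree automaton with states `St`. -/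
structure TreeAut (α St : Type) where
  leaf : Set St
  trans : α → St → St → Set St
  accept : Set St

/-- Evaluation relation of a tree automaton. -/
inductive TreeAutEval {α St : Type} (A : TreeAut α St) : BTree α → St → Prop
  | nil {s : St} : s ∈ A.leaf → TreeAutEval A .nil s
  | node {a : α} {l r : BTree α} {sl sr s : St} :
      TreeAutEval A l sl → TreeAutEval A r sr → s ∈ A.trans a sl sr →
      TreeAutEval A (.node a l r) s

def TreeAut.Accepts {α St : Type} (A : TreeAut α St) (t : BTree α) : Prop :=
  ∃ s ∈ A.accept, TreeAutEval A t s

/-- A set of trees is regular iff it is recognized by a tree automaton with a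
finite state set. -/
def TreeRegular {α : Type} (T : Set (BTree α)) : Prop :=
  ∃ (St : Type) (_ : Fintype St) (A : TreeAut α St), T = { t | A.Accepts t }

/-- The tree encoding `E` of a level-2 storage `p ∈ (Σ × ℕ)⁺` (as a relation;
`bot` is the designated symbol `⊥` labelling inner nodes):
`E(∅) = ∅`; if the first counter is `0` then `E((σ,0)·p_r) = ⊥(σ, E(p_r))`;
otherwise split `p` into the maximal prefix `p_l` with all counters `≥ 1`
(decremented) and the rest `p_r`, and `E(p) = ⊥(E(p_l), E(p_r))`. -/
inductive Encodes {Sig Q : Type} (bot : Sig) :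
    List (Sig × ℕ) → BTree (Sig ⊕ Q) → Prop
  | nil : Encodes bot [] .nil
  | zero {σ : Sig} {pr : List (Sig × ℕ)} {t : BTree (Sig ⊕ Q)} :
      Encodes bot pr t →
      Encodes bot ((σ, 0) :: pr)
        (.node (.inl bot) (.node (.inl σ) .nil .nil) t)
  | pos {pl pr : List (Sig × ℕ)} {tl tr : BTree (Sig ⊕ Q)} :
      pl ≠ [] → (∀ e ∈ pl, 1 ≤ e.2) →
      (∀ x, pr.head? = some x → x.2 = 0) →
      Encodes bot (pl.map (fun e => (e.1, e.2 - 1))) tl →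
      Encodes bot pr tr →
      Encodes bot (pl ++ pr) (.node (.inl bot) tl tr)

/-- Encoding of a configuration `(q,p)`: the tree `q(E(p), ∅)`. -/
def EncodesCfg {Sig Q : Type} (bot : Sig) (c : Q × List (Sig × ℕ))
    (t : BTree (Sig ⊕ Q)) : Prop :=
  ∃ tp, Encodes bot c.2 tp ∧ t = .node (.inr c.1) tp .nil

/-- The set of encodings of a set of configurations. -/
def EncImage {Sig Q : Type} (bot : Sig) (C : Set (Q × List (Sig × ℕ))) :
    Set (BTree (Sig ⊕ Q)) :=
  { t | ∃ c ∈ C, EncodesCfg bot c t }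

/-- A deterministic finite automaton over the unary alphabet `{⊥}`. -/
structure UnaryDFA (S : Type) where
  init : S
  next : S → S
  acc : Set S

/-- `D` accepts the word `⊥^m`. -/
def UnaryDFA.Accepts {S : Type} (D : UnaryDFA S) (m : ℕ) : Prop :=
  D.next^[m] D.init ∈ D.acc

/-- An alternating 2-store automaton: states `Q'` (partitioned into
existential (`exQ = true`) and universal states), final states, and a finite
set `T` of transitions, each with a source state, a symbol label, a unary
finite automaton checking the counter, and a destination state. -/
structure TwoStore (Q' Sig S T : Type) where
  exQ : Q' → Bool
  final : Set Q'
  src : T → Q'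
  sym : T → Sig
  chk : T → UnaryDFA S
  dst : T → Q'

/-- Accepting computations of a 2-store automaton on a storage, processed
entry by entry; at existential states one matching transition must succeed,
at universal states some transition must match and all matching transitions
must succeed. -/
inductive TwoStoreAcc {Q' Sig S T : Type} (A : TwoStore Q' Sig S T) :
    Q' → List (Sig × ℕ) → Prop
  | empty {q : Q'} : q ∈ A.final → TwoStoreAcc A q []
  | ex {q : Q'} {σ : Sig} {m : ℕ} {rest : List (Sig × ℕ)} (t : T) :
      A.exQ q = true → A.src t = q → A.sym t = σ → (A.chk t).Accepts m →
      TwoStoreAcc A (A.dst t) rest →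
      TwoStoreAcc A q ((σ, m) :: rest)
  | all {q : Q'} {σ : Sig} {m : ℕ} {rest : List (Sig × ℕ)} :
      A.exQ q = false →
      (∃ t : T, A.src t = q ∧ A.sym t = σ ∧ (A.chk t).Accepts m) →
      (∀ t : T, A.src t = q → A.sym t = σ → (A.chk t).Accepts m →
        TwoStoreAcc A (A.dst t) rest) →
      TwoStoreAcc A q ((σ, m) :: rest)

/-- A set of configurations is 2-store-regular iff it is recognized (via an
embedding of the configuration states) by an alternating 2-store automaton
with finitely many states, checking automata states and transitions. -/
def TwoStoreRegular {Q Sig : Type} (C : Set (Q × List (Sig × ℕ))) : Prop :=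
  ∃ (Q' S T : Type) (_ : Fintype Q') (_ : Fintype S) (_ : Fintype T)
    (A : TwoStore Q' Sig S T) (ι : Q → Q'),
    C = { c | TwoStoreAcc A (ι c.1) c.2 }

end Enc

/-! The acceptance behaviour of an alternating 2-store automaton on a storage `p`, as a function
of the initial states of its checking automata and of its set of final states, ranges over a
finite set and is compositional along the encoding `E`: a zero node prepends `(σ, 0)`, and a
`⊥`-node with a nonempty left subtree appends the storage of the right subtree to that of the
left one with all counters incremented, which amounts to advancing every checking automaton by
one step before reading the left part. A bottom-up tree automaton can therefore compute the
behaviour of `p` from `E(p)`, together with whether `p` is empty or starts with a zero counter. -/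

namespace Enc

variable {Q Q' Sig S T : Type}

def UnaryDFA.shift (D : UnaryDFA S) : UnaryDFA S := { D with init := D.next D.init }

def TwoStore.shift (A : TwoStore Q' Sig S T) : TwoStore Q' Sig S T :=
  { A with chk := fun t => (A.chk t).shift }

theorem twoStoreAcc_append {A : TwoStore Q' Sig S T} {q : Q'} {p₁ p₂ : List (Sig × ℕ)} :
    TwoStoreAcc A q (p₁ ++ p₂) ↔
      TwoStoreAcc { A with final := {q' | TwoStoreAcc A q' p₂} } q p₁ := by
  induction p₁ generalizing q with
  | nil => exact ⟨fun h => .empty h, fun | .empty h => h⟩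
  | cons e rest ih =>
    constructor
    · rintro (_ | ⟨t, hex, hsrc, hsym, hchk, hrest⟩ | ⟨hex, hfire, hall⟩)
      · exact .ex t hex hsrc hsym hchk (ih.mp hrest)
      · exact .all hex hfire fun t h₁ h₂ h₃ => ih.mp (hall t h₁ h₂ h₃)
    · rintro (_ | ⟨t, hex, hsrc, hsym, hchk, hrest⟩ | ⟨hex, hfire, hall⟩)
      · exact .ex t hex hsrc hsym hchk (ih.mpr hrest)
      · exact .all hex hfire fun t h₁ h₂ h₃ => ih.mpr (hall t h₁ h₂ h₃)

theorem twoStoreAcc_map_succ {A : TwoStore Q' Sig S T} {q : Q'} {p : List (Sig × ℕ)} :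
    TwoStoreAcc A q (p.map fun e => (e.1, e.2 + 1)) ↔ TwoStoreAcc A.shift q p := by
  induction p generalizing q with
  | nil => exact ⟨fun | .empty h => .empty h, fun | .empty h => .empty h⟩
  | cons e rest ih =>
    constructor
    · rintro (_ | ⟨t, hex, hsrc, hsym, hchk, hrest⟩ | ⟨hex, hfire, hall⟩)
      · exact .ex t hex hsrc hsym hchk (ih.mp hrest)
      · exact .all hex hfire fun t h₁ h₂ h₃ => ih.mp (hall t h₁ h₂ h₃)
    · rintro (_ | ⟨t, hex, hsrc, hsym, hchk, hrest⟩ | ⟨hex, hfire, hall⟩)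
      · exact .ex t hex hsrc hsym hchk (ih.mpr hrest)
      · exact .all hex hfire fun t h₁ h₂ h₃ => ih.mpr (hall t h₁ h₂ h₃)

def TwoStore.reinit (A : TwoStore Q' Sig S T) (init : T → S) (final : Set Q') :
    TwoStore Q' Sig S T :=
  { A with chk := fun t => { A.chk t with init := init t }, final }

abbrev Behaviour (Q' S T : Type) := (T → S) → Set Q' → Set Q'

def TwoStore.behaviour (A : TwoStore Q' Sig S T) (p : List (Sig × ℕ)) : Behaviour Q' S T :=
  fun init final => {q | TwoStoreAcc (A.reinit init final) q p}

theorem twoStoreAcc_iff_mem_behaviour {A : TwoStore Q' Sig S T} {q : Q'}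
    {p : List (Sig × ℕ)} :
    TwoStoreAcc A q p ↔ q ∈ A.behaviour p (fun t => (A.chk t).init) A.final :=
  Iff.rfl

theorem TwoStore.behaviour_append (A : TwoStore Q' Sig S T) (p₁ p₂ : List (Sig × ℕ)) :
    A.behaviour (p₁ ++ p₂) = fun init final => A.behaviour p₁ init (A.behaviour p₂ init final) := by
  funext init final
  ext q
  exact twoStoreAcc_append

theorem TwoStore.behaviour_map_succ (A : TwoStore Q' Sig S T) (p : List (Sig × ℕ)) :
    A.behaviour (p.map fun e => (e.1, e.2 + 1)) =
      fun init => A.behaviour p fun t => (A.chk t).next (init t) := by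
  funext init final
  ext q
  exact twoStoreAcc_map_succ

theorem TwoStore.behaviour_map_succ_append (A : TwoStore Q' Sig S T) (p p' : List (Sig × ℕ)) :
    A.behaviour ((p.map fun e => (e.1, e.2 + 1)) ++ p') = fun init final =>
      A.behaviour p (fun t => (A.chk t).next (init t)) (A.behaviour p' init final) := by
  rw [A.behaviour_append, A.behaviour_map_succ]

def headIsZero (p : List (Sig × ℕ)) : Option Bool := p.head?.map fun e => e.2 == 0

theorem headIsZero_eq_none {p : List (Sig × ℕ)} : headIsZero p = none ↔ p = [] := by
  simp [headIsZero]

theorem headIsZero_ne_some_false {p : List (Sig × ℕ)} :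
    headIsZero p ≠ some false ↔ ∀ x, p.head? = some x → x.2 = 0 := by
  cases p <;> simp [headIsZero]

theorem map_pred_map_succ (p : List (Sig × ℕ)) :
    ((p.map fun e => (e.1, e.2 + 1)).map fun e => (e.1, e.2 - 1)) = p := by
  simp [Function.comp_def]

theorem map_succ_map_pred {p : List (Sig × ℕ)} (hp : ∀ e ∈ p, 1 ≤ e.2) :
    ((p.map fun e => (e.1, e.2 - 1)).map fun e => (e.1, e.2 + 1)) = p := by
  refine (List.map_map ..).trans ((List.map_congr_left fun e he => ?_).trans (List.map_id p))
  have := hp e he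
  obtain ⟨σ, m⟩ := e
  simp only [Function.comp_apply, id_eq, Prod.mk.injEq, true_and] at this ⊢
  omega

theorem headIsZero_map_succ_append {p : List (Sig × ℕ)} (hp : p ≠ []) (p' : List (Sig × ℕ)) :
    headIsZero ((p.map fun e => (e.1, e.2 + 1)) ++ p') = some false := by
  obtain ⟨x, xs, rfl⟩ := List.exists_cons_of_ne_nil hp
  simp [headIsZero]

theorem Encodes.eq_nil {bot : Sig} {t : BTree (Sig ⊕ Q)} (h : Encodes bot [] t) : t = .nil := by
  generalize hp : ([] : List (Sig × ℕ)) = p at h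
  cases h with
  | nil => rfl
  | zero => simp at hp
  | pos hne => exact absurd (List.append_eq_nil_iff.mp hp.symm).1 hne

inductive State (Q' S T : Type)
  | storage (head : Option Bool) (f : Behaviour Q' S T)
  | symbol (f : Behaviour Q' S T)
  | accept

instance [Finite Q'] [Finite S] [Finite T] : Finite (State Q' S T) :=
  let flatten : State Q' S T → (Option Bool × Behaviour Q' S T) ⊕ Option (Behaviour Q' S T)
    | .storage k f => .inl (k, f)
    | .symbol f => .inr (some f)
    | .accept => .inr none
  Finite.of_injective flatten fun a b h => by cases a <;> cases b <;> simp_all [flatten]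

inductive Step (A : TwoStore Q' Sig S T) (bot : Sig) (ι : Q → Q') :
    Sig ⊕ Q → State Q' S T → State Q' S T → State Q' S T → Prop
  | symbol (σ : Sig) {f g : Behaviour Q' S T} :
      Step A bot ι (.inl σ) (.storage none f) (.storage none g) (.symbol (A.behaviour [(σ, 0)]))
  | zero {g f : Behaviour Q' S T} {k : Option Bool} :
      Step A bot ι (.inl bot) (.symbol g) (.storage k f)
        (.storage (some true) fun init final => g init (f init final))
  | pos {kl kr : Option Bool} {fl fr : Behaviour Q' S T} : kl ≠ none → kr ≠ some false →
      Step A bot ι (.inl bot) (.storage kl fl) (.storage kr fr)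
        (.storage (some false) fun init final =>
          fl (fun t => (A.chk t).next (init t)) (fr init final))
  | root {q : Q} {k : Option Bool} {f g : Behaviour Q' S T} :
      ι q ∈ f (fun t => (A.chk t).init) A.final →
      Step A bot ι (.inr q) (.storage k f) (.storage none g) .accept

def encodingAut (A : TwoStore Q' Sig S T) (bot : Sig) (ι : Q → Q') :
    TreeAut (Sig ⊕ Q) (State Q' S T) where
  leaf := {.storage none (A.behaviour [])}
  trans a sl sr := {s | Step A bot ι a sl sr s}
  accept := {.accept}

theorem treeAutEval_encodingAut_of_encodes {A : TwoStore Q' Sig S T} {bot : Sig} {ι : Q → Q'}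
    {p : List (Sig × ℕ)} {t : BTree (Sig ⊕ Q)} (h : Encodes bot p t) :
    TreeAutEval (encodingAut A bot ι) t (.storage (headIsZero p) (A.behaviour p)) := by
  induction h with
  | nil => exact .nil rfl
  | @zero σ pr _ _ ih =>
    have hleaf : TreeAutEval (encodingAut A bot ι) (.node (.inl σ) .nil .nil)
        (.symbol (A.behaviour [(σ, 0)])) := .node (.nil rfl) (.nil rfl) (.symbol σ)
    simpa [headIsZero, ← A.behaviour_append [(σ, 0)] pr] using TreeAutEval.node hleaf ih .zero
  | @pos pl pr _ _ hne hpos hhead _ _ ihl ihr =>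
    rw [← map_succ_map_pred hpos, headIsZero_map_succ_append (by simpa using hne),
      A.behaviour_map_succ_append]
    have hl : headIsZero (pl.map fun e => (e.1, e.2 - 1)) ≠ none := by
      simpa [headIsZero_eq_none] using hne
    exact .node ihl ihr (.pos hl (headIsZero_ne_some_false.mpr hhead))

def Describes (A : TwoStore Q' Sig S T) (bot : Sig) (ι : Q → Q') :
    State Q' S T → BTree (Sig ⊕ Q) → Prop
  | .storage k f, t => ∃ p, Encodes bot p t ∧ headIsZero p = k ∧ A.behaviour p = f
  | .symbol f, t => ∃ σ, t = .node (.inl σ) .nil .nil ∧ A.behaviour [(σ, 0)] = f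
  | .accept, t => ∃ c, TwoStoreAcc A (ι c.1) c.2 ∧ EncodesCfg bot c t

theorem describes_of_treeAutEval {A : TwoStore Q' Sig S T} {bot : Sig} {ι : Q → Q'}
    {t : BTree (Sig ⊕ Q)} {s : State Q' S T} (h : TreeAutEval (encodingAut A bot ι) t s) :
    Describes A bot ι s t := by
  induction h with
  | nil hs => exact hs ▸ ⟨[], .nil, rfl, rfl⟩
  | node _ _ hstep ihl ihr =>
    change Step A bot ι _ _ _ _ at hstep
    cases hstep with
    | symbol σ =>
      obtain ⟨pl, hl, hkl, -⟩ := ihl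
      obtain ⟨pr, hr, hkr, -⟩ := ihr
      rw [headIsZero_eq_none] at hkl hkr
      subst hkl hkr
      exact ⟨σ, by rw [hl.eq_nil, hr.eq_nil], rfl⟩
    | zero =>
      obtain ⟨σ, rfl, rfl⟩ := ihl
      obtain ⟨p, hr, -, rfl⟩ := ihr
      exact ⟨(σ, 0) :: p, .zero hr, rfl, A.behaviour_append [(σ, 0)] p⟩
    | pos hkl hkr =>
      obtain ⟨pl, hl, rfl, rfl⟩ := ihl
      obtain ⟨pr, hr, rfl, rfl⟩ := ihr
      have hne : pl ≠ [] := mt headIsZero_eq_none.mpr hkl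
      have hpos : ∀ e ∈ pl.map (fun e => (e.1, e.2 + 1)), 1 ≤ e.2 := by
        simp only [List.mem_map]
        rintro _ ⟨e, -, rfl⟩
        exact Nat.le_add_left 1 e.2
      refine ⟨_, .pos (by simpa using hne) hpos (headIsZero_ne_some_false.mp hkr)
        ((map_pred_map_succ pl).symm ▸ hl) hr, headIsZero_map_succ_append hne pr,
        A.behaviour_map_succ_append pl pr⟩
    | root hacc =>
      obtain ⟨p, hl, -, rfl⟩ := ihl
      obtain ⟨pr, hr, hkr, -⟩ := ihr
      rw [headIsZero_eq_none] at hkr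
      subst hkr
      exact ⟨(_, p), twoStoreAcc_iff_mem_behaviour.mpr hacc, _, hl, by rw [hr.eq_nil]⟩

end Enc

/-- Every 2-store-regular set of level-2 counter
configurations is E-regular: if `C` is accepted by a 2-store automaton, then
the set of tree encodings `{E(c) : c ∈ C}` is a regular tree language. -/
theorem twostore_regular_implies_eregular {Q Sig : Type} (bot : Sig)
    (C : Set (Q × List (Sig × ℕ))) (h : Enc.TwoStoreRegular C) :
    Enc.TreeRegular (Enc.EncImage bot C) := by
  obtain ⟨Q', S, T, _, _, _, A, ι, rfl⟩ := h
  refine ⟨Enc.State Q' S T, Fintype.ofFinite _, Enc.encodingAut A bot ι, ?_⟩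
  ext t
  constructor
  · rintro ⟨c, hc, tp, henc, rfl⟩
    exact ⟨.accept, rfl, .node (Enc.treeAutEval_encodingAut_of_encodes henc) (.nil rfl)
      (.root (Enc.twoStoreAcc_iff_mem_behaviour.mp hc))⟩
  · rintro ⟨s, rfl, hs⟩
    exact Enc.describes_of_treeAutEval hs
end

section
/- Let f : ℕ → ℕ be an unbounded function and S a test-free storage type. Then the language L_f = { aⁿ b^{f(n)} : n ∈ ℕ } is not recognized by any deterministic S-automaton. -/
/-! Storage types, test-freeness, and deterministic automata with storage. -/

namespace Stor

/-- A (finitely encoded) storage type: storage configurations `X`, a finite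
index set `T` of tests, a finite index set `F` of partial operations, and an
initial configuration. -/
structure StorageType (X T F : Type) where
  test : T → X → Bool
  op : F → X → Option X
  x0 : X

/-- A storage type is test-free if every test is constant on all storage
configurations. -/
def TestFree {X T F : Type} (S : StorageType X T F) : Prop :=
  ∀ (t : T) (x y : X), S.test t x = S.test t y

/-- The vector of test results on a storage configuration. -/
def tv {X T F : Type} (S : StorageType X T F) (x : X) : T → Bool :=
  fun t => S.test t x

/-- A deterministic `S`-automaton with states `Q` over input alphabet `Γ`:
the (at most one) transition from a state on an input symbol depends on the
test results; acceptance may depend on the final state and test results. -/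
structure DAut (X T F Q Γ : Type) where
  q0 : Q
  δ : Q → Γ → (T → Bool) → Option (F × Q)
  final : Q → (T → Bool) → Bool

/-- One deterministic step on input symbol `γ` (undefined if no transition is
applicable or the storage operation is undefined). -/
def step {X T F Q Γ : Type} (S : StorageType X T F) (A : DAut X T F Q Γ)
    (c : Q × X) (γ : Γ) : Option (Q × X) :=
  match A.δ c.1 γ (tv S c.2) with
  | none => none
  | some (f, p) => (S.op f c.2).map (fun x' => (p, x'))

/-- The (partial) run of the automaton on an input word. -/
def runWord {X T F Q Γ : Type} (S : StorageType X T F) (A : DAut X T F Q Γ) :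
    Q × X → List Γ → Option (Q × X)
  | c, [] => some c
  | c, γ :: w => (step S A c γ).bind (fun c' => runWord S A c' w)

/-- The language recognized by a deterministic `S`-automaton. -/
def LangOf {X T F Q Γ : Type} (S : StorageType X T F) (A : DAut X T F Q Γ) :
    Set (List Γ) :=
  { w | ∃ c : Q × X, runWord S A (A.q0, S.x0) w = some c ∧
      A.final c.1 (tv S c.2) = true }

end Stor

namespace Stor

variable {X T F Q Γ : Type}

theorem runWord_append (S : StorageType X T F) (A : DAut X T F Q Γ)
    (c : Q × X) (u v : List Γ) :
    runWord S A c (u ++ v) = (runWord S A c u).bind (fun c' => runWord S A c' v) := by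
  induction u generalizing c with
  | nil => simp [runWord]
  | cons γ w ih =>
    simp only [List.cons_append, runWord]
    cases step S A c γ with
    | none => rfl
    | some c' => simp [ih]

theorem tv_const (S : StorageType X T F) (hfree : TestFree S) (x y : X) :
    tv S x = tv S y := funext fun t => hfree t x y

theorem state_det (S : StorageType X T F) (hfree : TestFree S) (A : DAut X T F Q Γ)
    (w : List Γ) : ∀ (q : Q) (x y : X) (c d : Q × X),
    runWord S A (q, x) w = some c → runWord S A (q, y) w = some d → c.1 = d.1 := by
  induction w with
  | nil => intro q x y c d hc hd; simp [runWord] at hc hd; rw [← hc, ← hd]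
  | cons γ w ih =>
    intro q x y c d hc hd
    simp only [runWord, step, tv_const S hfree x y] at hc hd
    cases hδ : A.δ q γ (tv S y) with
    | none => rw [hδ] at hc; simp at hc
    | some fp =>
      rw [hδ] at hc hd
      obtain ⟨g, p⟩ := fp
      dsimp only at hc hd
      cases hx : S.op g x with
      | none => rw [hx] at hc; simp at hc
      | some x' =>
        cases hy : S.op g y with
        | none => rw [hy] at hd; simp at hd
        | some y' =>
          rw [hx] at hc; rw [hy] at hd
          simp only [Option.map_some, Option.bind_some] at hc hd
          exact ih p x' y' c d hc hd

end Stor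

theorem rep_eq_aux {n m k l : ℕ}
    (h : List.replicate n true ++ List.replicate m false =
      List.replicate k true ++ List.replicate l false) : n = k ∧ m = l := by
  constructor
  · have := congrArg (List.count true) h
    simpa [List.count_append, List.count_replicate] using this
  · have := congrArg (List.count false) h
    simpa [List.count_append, List.count_replicate] using this

/-- Let `f : ℕ → ℕ` be unbounded and `S` a test-free storage
type. Then the language `L_f = {aⁿ b^(f n) : n ∈ ℕ}` (with `a = true`,
`b = false`) is not recognized by any deterministic `S`-automaton. -/
theorem testfree_no_unbounded_language {X T F Q : Type}
    [Fintype T] [Fintype F] [Fintype Q]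
    (S : Stor.StorageType X T F) (hfree : Stor.TestFree S)
    (f : ℕ → ℕ) (hunb : ∀ B : ℕ, ∃ n : ℕ, B ≤ f n)
    (A : Stor.DAut X T F Q Bool) :
    Stor.LangOf S A ≠
      { w : List Bool | ∃ n : ℕ,
        w = List.replicate n true ++ List.replicate (f n) false } := by
  intro h
  -- membership characterization of each `aⁿ b^(f n)`
  have hmem : ∀ n : ℕ, ∃ c : Q × X,
      Stor.runWord S A (A.q0, S.x0)
        (List.replicate n true ++ List.replicate (f n) false) = some c ∧
      A.final c.1 (Stor.tv S c.2) = true := by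
    intro n
    have : (List.replicate n true ++ List.replicate (f n) false) ∈ Stor.LangOf S A := by
      rw [h]; exact ⟨n, rfl⟩
    exact this
  -- the run on each prefix aⁿ exists
  have hpre : ∀ n : ℕ, ∃ ca : Q × X,
      Stor.runWord S A (A.q0, S.x0) (List.replicate n true) = some ca := by
    intro n
    obtain ⟨c, hc, -⟩ := hmem n
    rw [Stor.runWord_append] at hc
    cases hr : Stor.runWord S A (A.q0, S.x0) (List.replicate n true) with
    | none => rw [hr] at hc; simp at hc
    | some ca => exact ⟨ca, rfl⟩
  choose ca hca using hpre
  -- build a sequence on which f is strictly increasing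
  let g : ℕ → ℕ := fun k =>
    Nat.rec ((hunb 0).choose) (fun _ prev => (hunb (f prev + 1)).choose) k
  have hg : ∀ k, f (g k) + 1 ≤ f (g (k + 1)) := fun k => (hunb (f (g k) + 1)).choose_spec
  have hmono : StrictMono (fun k => f (g k)) :=
    strictMono_nat_of_lt_succ fun k => by have := hg k; omega
  -- pigeonhole on the states reached after a^(g k)
  obtain ⟨i, j, hij, heq⟩ :=
    Finite.exists_ne_map_eq_of_infinite (fun k : ℕ => (ca (g k)).1)
  wlog hlt : i < j generalizing i j
  · exact this j i hij.symm heq.symm (by omega)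
  set n₁ := g i with hn₁
  set n₂ := g j with hn₂
  have hflt : f n₁ < f n₂ := hmono hlt
  -- run from ca n₁ on b^(f n₁) exists and accepts
  obtain ⟨c, hc, hfin⟩ := hmem n₁
  rw [Stor.runWord_append, hca n₁, Option.bind_some] at hc
  -- run from ca n₂ on b^(f n₂) exists
  obtain ⟨e, he, -⟩ := hmem n₂
  rw [Stor.runWord_append, hca n₂, Option.bind_some] at he
  have hsplit : List.replicate (f n₂) false =
      List.replicate (f n₁) false ++ List.replicate (f n₂ - f n₁) false := by
    rw [← List.replicate_add]
    congr 1
    omega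
  rw [hsplit, Stor.runWord_append] at he
  have he' : ∃ e' : Q × X,
      Stor.runWord S A (ca n₂) (List.replicate (f n₁) false) = some e' := by
    cases hr : Stor.runWord S A (ca n₂) (List.replicate (f n₁) false) with
    | none => rw [hr] at he; simp at he
    | some e' => exact ⟨e', rfl⟩
  obtain ⟨e', he'⟩ := he'
  -- same control state after a^(n₁) and a^(n₂)
  have hstate : (ca n₁).1 = (ca n₂).1 := heq
  -- state determinism: e'.1 = c.1
  have hc2 : Stor.runWord S A ((ca n₁).1, (ca n₁).2) (List.replicate (f n₁) false)
      = some c := by rw [Prod.mk.eta]; exact hc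
  have he2 : Stor.runWord S A ((ca n₁).1, (ca n₂).2) (List.replicate (f n₁) false)
      = some e' := by rw [hstate, Prod.mk.eta]; exact he'
  have hsame : c.1 = e'.1 :=
    Stor.state_det S hfree A (List.replicate (f n₁) false) (ca n₁).1
      (ca n₁).2 (ca n₂).2 c e' hc2 he2
  -- hence a^(n₂) b^(f n₁) is accepted
  have hacc : (List.replicate n₂ true ++ List.replicate (f n₁) false) ∈
      Stor.LangOf S A := by
    refine ⟨e', ?_, ?_⟩
    · rw [Stor.runWord_append, hca n₂, Option.bind_some]; exact he'
    · rw [← hsame, Stor.tv_const S hfree e'.2 c.2]; exact hfin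
  rw [h] at hacc
  obtain ⟨m, hm⟩ := hacc
  obtain ⟨hm1, hm2⟩ := rep_eq_aux hm
  rw [← hm1] at hm2
  omega
end

section
/- The counter storage with zero-test Z+ cannot be deterministically simulated by any test-free storage type S; in particular, Z+ is not simulated by C^k(C) or by C^k_inv(C) for any k, where C is the unary pushdown operator without tests. Concretely: there is a deterministic Z+-automaton recognizing { aⁿbⁿ : n ∈ ℕ }, but no deterministic S-automaton with S test-free recognizes this language. -/
/-- The storage type `Z+`: a counter with increment (`0`), decrement
(`1`, undefined at `0`), identity (`2`), and a zero-test. -/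
def ZPlus : Stor.StorageType ℕ Unit (Fin 3) where
  test := fun _ n => decide (n = 0)
  op := fun i n =>
    if i = 0 then some (n + 1)
    else if i = 1 then (if n = 0 then none else some (n - 1))
    else some n
  x0 := 0

/-!
With constant tests the finite control of a deterministic automaton never sees its storage; the
storage can only block a run. Hence the state reached on a word does not depend on the storage
contents. By pigeonhole some `m < n` lead to the same state after `aᵐ` and after `aⁿ`. The run on
`aⁿbᵐ` is a prefix of the accepting run on `aⁿbⁿ`, so it is defined, and it ends in the same state
as the accepting run on `aᵐbᵐ`, with the same (constant) test results: `aⁿbᵐ` is accepted.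
-/

namespace Stor

variable {X T F Q Γ : Type} {S : StorageType X T F} {A : DAut X T F Q Γ}

variable (S A) in
def Accepts (c : Q × X) (w : List Γ) : Prop :=
  ∃ c', runWord S A c w = some c' ∧ A.final c'.1 (tv S c'.2) = true

theorem accepts_nil {c : Q × X} : Accepts S A c [] ↔ A.final c.1 (tv S c.2) = true := by
  simp [Accepts, runWord]

theorem accepts_cons {c : Q × X} {γ : Γ} {w : List Γ} :
    Accepts S A c (γ :: w) ↔ ∃ c', step S A c γ = some c' ∧ Accepts S A c' w := by
  simp only [Accepts, runWord, Option.bind_eq_some_iff]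
  exact ⟨fun ⟨c', ⟨d, hd, h⟩, hf⟩ => ⟨d, hd, c', h, hf⟩,
    fun ⟨d, hd, c', h, hf⟩ => ⟨c', ⟨d, hd, h⟩, hf⟩⟩

theorem runWord_append_eq_some {c e : Q × X} {u v : List Γ} :
    runWord S A c (u ++ v) = some e ↔
      ∃ d, runWord S A c u = some d ∧ runWord S A d v = some e := by
  induction u generalizing c with
  | nil => simp [runWord]
  | cons γ u ih =>
    simp only [List.cons_append, runWord, Option.bind_eq_some_iff, ih]
    exact ⟨fun ⟨d, hd, e', h, h'⟩ => ⟨e', ⟨d, hd, h⟩, h'⟩,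
      fun ⟨e', ⟨d, hd, h⟩, h'⟩ => ⟨d, hd, e', h, h'⟩⟩

theorem TestFree.tv_eq (hS : TestFree S) (x y : X) : tv S x = tv S y :=
  funext fun t => hS t x y

theorem TestFree.step_fst_eq (hS : TestFree S) {q : Q} {x y : X} {γ : Γ} {d d' : Q × X}
    (h : step S A (q, x) γ = some d) (h' : step S A (q, y) γ = some d') : d.1 = d'.1 := by
  rw [step, hS.tv_eq x y] at h
  rw [step] at h'
  cases hδ : A.δ q γ (tv S y) with
  | none => simp [hδ] at h
  | some fp =>
    simp only [hδ, Option.map_eq_some_iff] at h h'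
    obtain ⟨_, -, rfl⟩ := h
    obtain ⟨_, -, rfl⟩ := h'
    rfl

theorem TestFree.runWord_fst_eq (hS : TestFree S) {c₁ c₂ e₁ e₂ : Q × X} {w : List Γ}
    (hc : c₁.1 = c₂.1) (h₁ : runWord S A c₁ w = some e₁) (h₂ : runWord S A c₂ w = some e₂) :
    e₁.1 = e₂.1 := by
  induction w generalizing c₁ c₂ with
  | nil => simp only [runWord, Option.some_inj] at h₁ h₂; rw [← h₁, ← h₂, hc]
  | cons γ w ih =>
    obtain ⟨q, x₁⟩ := c₁
    obtain ⟨q', x₂⟩ := c₂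
    obtain rfl : q = q' := hc
    simp only [runWord, Option.bind_eq_some_iff] at h₁ h₂
    obtain ⟨d₁, hd₁, h₁⟩ := h₁
    obtain ⟨d₂, hd₂, h₂⟩ := h₂
    exact ih (hS.step_fst_eq hd₁ hd₂) h₁ h₂

theorem TestFree.append_mem_langOf (hS : TestFree S) {u u' v r : List Γ}
    (hq : (runWord S A (A.q0, S.x0) u).map Prod.fst =
      (runWord S A (A.q0, S.x0) u').map Prod.fst)
    (h : u ++ (v ++ r) ∈ LangOf S A) (h' : u' ++ v ∈ LangOf S A) : u ++ v ∈ LangOf S A := by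
  obtain ⟨c, hc, -⟩ := h
  obtain ⟨c', hc', hfin⟩ := h'
  rw [← List.append_assoc, runWord_append_eq_some] at hc
  obtain ⟨e, he, -⟩ := hc
  obtain ⟨d, hd, hde⟩ := runWord_append_eq_some.mp he
  obtain ⟨d', hd', hdc'⟩ := runWord_append_eq_some.mp hc'
  have hdd' : d.1 = d'.1 := by simpa [hd, hd'] using hq
  refine ⟨e, he, ?_⟩
  rwa [hS.runWord_fst_eq hdd' hde hdc', hS.tv_eq e.2 c'.2]

end Stor

theorem List.eq_of_replicate_append_replicate_eq {α : Type*} [DecidableEq α] {a b : α}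
    (hab : a ≠ b) {n m k : ℕ}
    (h : replicate n a ++ replicate m b = replicate k a ++ replicate k b) : n = m := by
  have ha := congrArg (count a) h
  have hb := congrArg (count b) h
  simp [count_replicate, hab, hab.symm] at ha hb
  omega

open Stor List

/-- Operation `0` pushes, `1` pops; state `false` reads `a = true`, state `true` reads
`b = false`, and the zero-test decides acceptance. -/
def anbnAut : DAut ℕ Unit (Fin 3) Bool Bool where
  q0 := false
  δ := fun q γ _ =>
    match q, γ with
    | false, true => some (0, false)
    | _, false => some (1, true)
    | true, true => none
  final := fun _ t => t ()

namespace anbnAut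

@[simp]
theorem step_false_true (x : ℕ) : step ZPlus anbnAut (false, x) true = some (false, x + 1) := rfl

@[simp]
theorem step_true_true (x : ℕ) : step ZPlus anbnAut (true, x) true = none := rfl

@[simp]
theorem step_zero_false (q : Bool) : step ZPlus anbnAut (q, 0) false = none := by
  cases q <;> rfl

@[simp]
theorem step_succ_false (q : Bool) (x : ℕ) :
    step ZPlus anbnAut (q, x + 1) false = some (true, x) := by
  cases q <;> rfl

@[simp]
theorem accepts_nil_iff (c : Bool × ℕ) : Accepts ZPlus anbnAut c [] ↔ c.2 = 0 := by
  simp [accepts_nil, anbnAut, ZPlus, tv]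

theorem accepts_true (x : ℕ) (w : List Bool) :
    Accepts ZPlus anbnAut (true, x) w ↔ w = replicate x false := by
  induction w generalizing x with
  | nil => simp [@eq_comm _ []]
  | cons γ w ih =>
    rw [accepts_cons]
    cases γ <;> cases x <;> simp [replicate_succ, ih]

theorem accepts_false (x : ℕ) (w : List Bool) :
    Accepts ZPlus anbnAut (false, x) w ↔
      ∃ n, w = replicate n true ++ replicate (x + n) false := by
  induction w generalizing x with
  | nil => simp [@eq_comm _ []]
  | cons γ w ih =>
    rw [accepts_cons]
    cases γ with
    | true =>
      simp only [step_false_true, Option.some.injEq, exists_eq_left', ih]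
      constructor
      · rintro ⟨n, rfl⟩
        exact ⟨n + 1, by rw [Nat.add_right_comm]; rfl⟩
      · rintro ⟨_ | n, h⟩
        · cases x <;> simp [replicate_succ] at h
        · simp only [replicate_succ, cons_append, cons.injEq, true_and] at h
          exact ⟨n, by rw [h, Nat.add_right_comm]; rfl⟩
    | false =>
      cases x with
      | zero =>
        simp only [step_zero_false, reduceCtorEq, false_and, exists_false, zero_add, false_iff]
        rintro ⟨_ | n, h⟩ <;> simp [replicate_succ] at h
      | succ x =>
        simp only [step_succ_false, Option.some.injEq, exists_eq_left', accepts_true]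
        constructor
        · rintro rfl
          exact ⟨0, rfl⟩
        · rintro ⟨_ | n, h⟩ <;> simp [replicate_succ] at h
          exact h

end anbnAut

theorem langOf_anbnAut :
    LangOf ZPlus anbnAut = {w | ∃ n, w = replicate n true ++ replicate n false} :=
  Set.ext fun w => (anbnAut.accepts_false 0 w).trans (by simp)

/-- `Z+` cannot be deterministically simulated by any
test-free storage type: there is a deterministic `Z+`-automaton recognizing
`{aⁿbⁿ : n ∈ ℕ}` (with `a = true`, `b = false`), but for every test-free
storage type `S` no deterministic `S`-automaton recognizes this language
(in particular the test-free storages `C^k(C)` and `C^k_inv(C)` do not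
simulate `Z+`). -/
theorem zplus_not_simulated_by_testfree :
    (∃ (Q : Type) (_ : Fintype Q) (A : Stor.DAut ℕ Unit (Fin 3) Q Bool),
      Stor.LangOf ZPlus A =
        { w : List Bool | ∃ n : ℕ,
          w = List.replicate n true ++ List.replicate n false }) ∧
    (∀ (X T F Q : Type), Fintype T → Fintype F → Fintype Q →
      ∀ (S : Stor.StorageType X T F), Stor.TestFree S →
      ∀ A : Stor.DAut X T F Q Bool,
        Stor.LangOf S A ≠
          { w : List Bool | ∃ n : ℕ,
            w = List.replicate n true ++ List.replicate n false }) := by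
  refine ⟨⟨Bool, inferInstance, anbnAut, langOf_anbnAut⟩, ?_⟩
  intro X T F Q _ _ _ S hS A hL
  have hmem (k : ℕ) : replicate k true ++ replicate k false ∈ LangOf S A := hL ▸ ⟨k, rfl⟩
  obtain ⟨m, n, hmn, hq⟩ := Set.Finite.exists_lt_map_eq_of_forall_mem
    (f := fun k => (runWord S A (A.q0, S.x0) (replicate k true)).map Prod.fst)
    (fun _ => Set.mem_univ _) Set.finite_univ
  have hbad : replicate n true ++ replicate m false ∈ LangOf S A := by
    refine hS.append_mem_langOf hq.symm (r := replicate (n - m) false) ?_ (hmem m)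
    rw [← replicate_add, Nat.add_sub_cancel' hmn.le]
    exact hmem n
  rw [hL] at hbad
  obtain ⟨k, hk⟩ := hbad
  exact hmn.ne' (eq_of_replicate_append_replicate_eq (by decide) hk)
end
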